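/- arXiv:2501.10805 — 3 statements merged into one kernel-verified Lean document; each statement's English description precedes it below -/
import Mathlib

section
/- Let $k \geq 2$ and let $u_0, u_1, \ldots, u_{k-1}$ be positive reals, and define $u_k = -(u_0 + \cdots + u_{k-1})$. Then the integral over $\mathbb{R}^{k-1}$ of $\exp\big(-\sum_{i=1}^{k-1} u_i x_i - u_k \min(0, x_1, \ldots, x_{k-1})\big)$ converges and equals $(u_0 + u_1 + \cdots + u_{k-1})/(u_0 u_1 \cdots u_{k-1})$. -/
/-!
With `S = u₀ + ∑ vᵢ` and `m(x) = min(0, x₁, …, xₙ)`, write `exp (S m(x)) = ∫_{t ≤ m(x)} S e^{S t} dt`.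
After exchanging the integrals, the constraint `t ≤ m(x)` says `t ≤ 0` and `xᵢ ≥ t` for all `i`,
so the `x`-integral factorizes into `∏ e^{-vᵢ t} / vᵢ`, leaving
`∫_{t ≤ 0} (S / ∏ vᵢ) e^{u₀ t} dt = S / (u₀ ∏ vᵢ)`. The lifted integrand is nonnegative, so the
same computation gives its integrability on the product, which is what justifies the exchange.
-/

open MeasureTheory Real Set

lemma integral_mul_exp_mul_Iic {c : ℝ} (hc : 0 < c) (a : ℝ) :
    ∫ t in Iic a, c * exp (c * t) = exp (c * a) := by
  rw [integral_const_mul, integral_exp_mul_Iic hc, mul_div_cancel₀ _ hc.ne']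

lemma integrableOn_exp_neg_mul_Ici {c : ℝ} (hc : 0 < c) (a : ℝ) :
    IntegrableOn (fun s => exp (-c * s)) (Ici a) := by
  rw [integrableOn_Ici_iff_integrableOn_Ioi]
  exact integrableOn_exp_mul_Ioi (neg_lt_zero.2 hc) a

lemma integral_exp_neg_mul_Ici {c : ℝ} (hc : 0 < c) (a : ℝ) :
    ∫ s in Ici a, exp (-c * s) = exp (-c * a) / c := by
  rw [integral_Ici_eq_integral_Ioi, integral_exp_mul_Ioi (neg_lt_zero.2 hc), neg_div_neg_eq]

section minWithZero

variable {ι : Type*} [Fintype ι]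

noncomputable def minWithZero (x : ι → ℝ) : ℝ :=
  (insert 0 (Finset.univ.image x)).min' (Finset.insert_nonempty _ _)

lemma le_minWithZero_iff {x : ι → ℝ} {t : ℝ} : t ≤ minWithZero x ↔ t ≤ 0 ∧ ∀ i, t ≤ x i := by
  simp [minWithZero, Finset.le_min'_iff]

lemma measurable_minWithZero : Measurable (minWithZero : (ι → ℝ) → ℝ) := by
  refine measurable_of_Ici fun t => ?_
  have : minWithZero ⁻¹' Ici t = {_x | t ≤ 0} ∩ ⋂ i, {x : ι → ℝ | t ≤ x i} := by
    ext x; simp [le_minWithZero_iff]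
  rw [this]
  exact (MeasurableSet.const _).inter
    (.iInter fun i => measurableSet_le measurable_const (measurable_pi_apply i))

end minWithZero

namespace Schwinger

variable {ι : Type*} [Fintype ι] {u₀ : ℝ} {v : ι → ℝ}

-- `v i` is the paper's `u_{i+1}`, and `-(u₀ + ∑ i, v i)` is its `u_k`.
noncomputable def tropicalPotential (u₀ : ℝ) (v : ι → ℝ) (x : ι → ℝ) : ℝ :=
  ∑ i, v i * x i - (u₀ + ∑ i, v i) * minWithZero x

noncomputable def liftedIntegrand (u₀ : ℝ) (v : ι → ℝ) (p : ℝ × (ι → ℝ)) : ℝ :=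
  {q : ℝ × (ι → ℝ) | q.1 ≤ minWithZero q.2}.indicator
    (fun q => (u₀ + ∑ i, v i) * exp ((u₀ + ∑ i, v i) * q.1) * ∏ i, exp (-v i * q.2 i)) p

lemma add_sum_pos (hu₀ : 0 < u₀) (hv : ∀ i, 0 < v i) : 0 < u₀ + ∑ i, v i :=
  add_pos_of_pos_of_nonneg hu₀ (Finset.sum_nonneg fun i _ => (hv i).le)

lemma measurable_liftedIntegrand : Measurable (liftedIntegrand u₀ v) :=
  (Measurable.indicator (by fun_prop)
    (measurableSet_le measurable_fst (measurable_minWithZero.comp measurable_snd)))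

lemma liftedIntegrand_nonneg (hu₀ : 0 < u₀) (hv : ∀ i, 0 < v i) (p : ℝ × (ι → ℝ)) :
    0 ≤ liftedIntegrand u₀ v p := by
  have := add_sum_pos hu₀ hv
  exact indicator_nonneg (fun q _ => by positivity) p

lemma integral_liftedIntegrand_fst (hu₀ : 0 < u₀) (hv : ∀ i, 0 < v i) (x : ι → ℝ) :
    ∫ t, liftedIntegrand u₀ v (t, x) = exp (-tropicalPotential u₀ v x) := by
  calc ∫ t, liftedIntegrand u₀ v (t, x)
      = ∫ t in Iic (minWithZero x),
          (u₀ + ∑ i, v i) * exp ((u₀ + ∑ i, v i) * t) * ∏ i, exp (-v i * x i) :=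
        integral_indicator (s := Iic (minWithZero x)) measurableSet_Iic
    _ = exp ((u₀ + ∑ i, v i) * minWithZero x) * ∏ i, exp (-v i * x i) := by
        rw [integral_mul_const, integral_mul_exp_mul_Iic (add_sum_pos hu₀ hv)]
    _ = exp (-tropicalPotential u₀ v x) := by
        rw [← exp_sum, ← exp_add, tropicalPotential]
        congr 1
        simp only [neg_mul, Finset.sum_neg_distrib]
        ring

lemma liftedIntegrand_eq_mul_prod (t : ℝ) (x : ι → ℝ) :
    liftedIntegrand u₀ v (t, x) =
      (Iic 0).indicator (fun t => (u₀ + ∑ i, v i) * exp ((u₀ + ∑ i, v i) * t)) t *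
        ∏ i, (Ici t).indicator (fun s => exp (-v i * s)) (x i) := by
  by_cases h : t ≤ minWithZero x
  · obtain ⟨h0, hx⟩ := le_minWithZero_iff.1 h
    rw [liftedIntegrand, indicator_of_mem (show (t, x) ∈ _ from h),
      indicator_of_mem (show t ∈ Iic 0 from h0)]
    simp only [indicator_of_mem (mem_Ici.2 (hx _))]
  · rw [liftedIntegrand, indicator_of_notMem (show (t, x) ∉ _ from h)]
    rcases not_and_or.1 (mt le_minWithZero_iff.2 h) with h0 | hx
    · rw [indicator_of_notMem (show t ∉ Iic 0 from h0), zero_mul]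
    · obtain ⟨i, hi⟩ := not_forall.1 hx
      rw [Finset.prod_eq_zero (Finset.mem_univ i) (indicator_of_notMem hi _), mul_zero]

lemma integrable_liftedIntegrand_snd (hv : ∀ i, 0 < v i) (t : ℝ) :
    Integrable (fun x => liftedIntegrand u₀ v (t, x)) := by
  simp_rw [liftedIntegrand_eq_mul_prod]
  refine .const_mul (.fintype_prod fun i => ?_) _
  exact (integrable_indicator_iff measurableSet_Ici).2 (integrableOn_exp_neg_mul_Ici (hv i) t)

lemma integral_liftedIntegrand_snd (hv : ∀ i, 0 < v i) (t : ℝ) :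
    ∫ x, liftedIntegrand u₀ v (t, x) =
      (Iic 0).indicator (fun t => (u₀ + ∑ i, v i) / (∏ i, v i) * exp (u₀ * t)) t := by
  simp_rw [liftedIntegrand_eq_mul_prod]
  rw [integral_const_mul, integral_fintype_prod_volume_eq_prod]
  simp_rw [integral_indicator measurableSet_Ici, integral_exp_neg_mul_Ici (hv _)]
  by_cases ht : t ∈ Iic 0
  · rw [indicator_of_mem ht, indicator_of_mem ht, Finset.prod_div_distrib, ← exp_sum,
      ← Finset.sum_mul, mul_div_assoc', mul_assoc, ← exp_add, Finset.sum_neg_distrib,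
      div_mul_eq_mul_div]
    ring_nf
  · rw [indicator_of_notMem ht, indicator_of_notMem ht, zero_mul]

lemma integrable_liftedIntegrand (hu₀ : 0 < u₀) (hv : ∀ i, 0 < v i) :
    Integrable (liftedIntegrand u₀ v) (volume.prod volume) := by
  rw [integrable_prod_iff measurable_liftedIntegrand.aestronglyMeasurable]
  refine ⟨.of_forall (integrable_liftedIntegrand_snd hv), ?_⟩
  simp_rw [norm_of_nonneg (liftedIntegrand_nonneg hu₀ hv _), integral_liftedIntegrand_snd hv,
    integrable_indicator_iff measurableSet_Iic]
  exact (integrableOn_exp_mul_Iic hu₀ 0).const_mul _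

theorem integrable_exp_neg_tropicalPotential (hu₀ : 0 < u₀) (hv : ∀ i, 0 < v i) :
    Integrable (fun x => exp (-tropicalPotential u₀ v x)) := by
  simpa only [integral_liftedIntegrand_fst hu₀ hv] using
    (integrable_liftedIntegrand hu₀ hv).integral_prod_right

theorem integral_exp_neg_tropicalPotential (hu₀ : 0 < u₀) (hv : ∀ i, 0 < v i) :
    ∫ x, exp (-tropicalPotential u₀ v x) = (u₀ + ∑ i, v i) / (u₀ * ∏ i, v i) := by
  have hG := integrable_liftedIntegrand hu₀ hv
  calc ∫ x, exp (-tropicalPotential u₀ v x)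
      = ∫ x, ∫ t, liftedIntegrand u₀ v (t, x) := by
        simp_rw [integral_liftedIntegrand_fst hu₀ hv]
    _ = ∫ t, ∫ x, liftedIntegrand u₀ v (t, x) := by
        rw [← integral_prod_symm _ hG, integral_prod _ hG]
    _ = ∫ t in Iic 0, (u₀ + ∑ i, v i) / (∏ i, v i) * exp (u₀ * t) := by
        simp_rw [integral_liftedIntegrand_snd hv]
        exact integral_indicator measurableSet_Iic
    _ = (u₀ + ∑ i, v i) / (u₀ * ∏ i, v i) := by
        rw [integral_const_mul, integral_exp_mul_Iic hu₀, mul_zero, exp_zero, mul_one_div,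
          div_div, mul_comm u₀]

end Schwinger

theorem schwinger_simplex (k : ℕ) (hk : 2 ≤ k) (u : ℕ → ℝ)
    (hu : ∀ i < k, 0 < u i) :
    Integrable (fun x : Fin (k - 1) → ℝ =>
        Real.exp (-(∑ i : Fin (k - 1), u (i.val + 1) * x i -
          (∑ i ∈ Finset.range k, u i) *
            (insert (0:ℝ) (Finset.image x Finset.univ)).min'
              (Finset.insert_nonempty _ _)))) ∧
    ∫ x : Fin (k - 1) → ℝ,
        Real.exp (-(∑ i : Fin (k - 1), u (i.val + 1) * x i -
          (∑ i ∈ Finset.range k, u i) *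
            (insert (0:ℝ) (Finset.image x Finset.univ)).min'
              (Finset.insert_nonempty _ _))) =
      (∑ i ∈ Finset.range k, u i) / ∏ i ∈ Finset.range k, u i := by
  obtain ⟨n, rfl⟩ : ∃ n, k = n + 1 := ⟨k - 1, by omega⟩
  have hu₀ : 0 < u 0 := hu 0 (by omega)
  have hv : ∀ i : Fin n, 0 < u (i + 1) := fun i => hu _ (by omega)
  have hsum : ∑ i ∈ Finset.range (n + 1), u i = u 0 + ∑ i : Fin n, u (i + 1) := by
    rw [Finset.sum_range_succ', Fin.sum_univ_eq_sum_range (fun i => u (i + 1)), add_comm]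
  have hprod : ∏ i ∈ Finset.range (n + 1), u i = u 0 * ∏ i : Fin n, u (i + 1) := by
    rw [Finset.prod_range_succ', Fin.prod_univ_eq_prod_range (fun i => u (i + 1)), mul_comm]
  rw [hsum, hprod]
  exact ⟨Schwinger.integrable_exp_neg_tropicalPotential hu₀ hv,
    Schwinger.integral_exp_neg_tropicalPotential hu₀ hv⟩
end

section
/- For generalized kinematic invariants $\mathsf{s}_{abc}$ on 6 particles satisfying momentum conservation, the identities $\mathsf{t}_{1234}+\mathsf{t}_{3456}+\mathsf{t}_{5612} = R_1 + \tilde{R}_1$ and $\mathsf{t}_{2345}+\mathsf{t}_{4561}+\mathsf{t}_{6123} = R_2 + \tilde{R}_2$ hold, where $\mathsf{t}_{abcd} = \mathsf{s}_{abc}+\mathsf{s}_{abd}+\mathsf{s}_{acd}+\mathsf{s}_{bcd}$, $R_{abcdef} = \mathsf{t}_{abcd}+\mathsf{s}_{cde}+\mathsf{s}_{cdf}$, $R_1 = R_{123456}$, $\tilde{R}_1 = R_{125634}$, $R_2 = R_{234561}$, $\tilde{R}_2 = R_{614523}$. -/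
/-- `tQuad s a b c d = 𝗍_{abcd} = 𝗌_{abc} + 𝗌_{abd} + 𝗌_{acd} + 𝗌_{bcd}`. -/
def tQuad (s : ℕ → ℕ → ℕ → ℝ) (a b c d : ℕ) : ℝ :=
  s a b c + s a b d + s a c d + s b c d

/-- `R_{abcdef} = 𝗍_{abcd} + 𝗌_{cde} + 𝗌_{cdf}`. -/
def RR (s : ℕ → ℕ → ℕ → ℝ) (a b c d e f : ℕ) : ℝ :=
  tQuad s a b c d + s c d e + s c d f

/-!
The first identity is a consequence of the permutation symmetry of `𝗌` alone. After the same
rearrangement, the second one reduces to `𝗍_{1236} = 𝗌_{451} + 𝗌_{452} + 𝗌_{453} + 𝗌_{456}`,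
which is where momentum conservation enters: summing all six relations counts every triple three
times, so the twenty invariants add up to zero, while the relations at `4` and `5` together count
the triples containing both `4` and `5` twice and those meeting `{4, 5}` once. Subtracting, the
triples avoiding `{4, 5}` sum to the triples containing both.
-/

section Symmetric

variable {s : ℕ → ℕ → ℕ → ℝ}

theorem s_rotate (hsymm1 : ∀ a b c, s a b c = s b a c) (hsymm2 : ∀ a b c, s a b c = s a c b)
    (a b c : ℕ) : s a b c = s b c a := by
  rw [hsymm1, hsymm2]

theorem tQuad_add_tQuad_add_tQuad_eq_RR_add_RR (hsymm1 : ∀ a b c, s a b c = s b a c)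
    (hsymm2 : ∀ a b c, s a b c = s a c b) (a b c d e f : ℕ) :
    tQuad s a b c d + tQuad s c d e f + tQuad s e f a b =
      RR s a b c d e f + RR s a b e f c d := by
  have rot := s_rotate hsymm1 hsymm2
  simp only [tQuad, RR]
  linarith [rot a e f, rot b e f, rot c e f, rot d e f, rot e a b, rot f a b]

theorem tQuad_add_tQuad_add_tQuad_eq_RR_add_RR_of_tQuad_eq
    (hsymm1 : ∀ a b c, s a b c = s b a c) (hsymm2 : ∀ a b c, s a b c = s a c b) {a b c d e f : ℕ}
    (h : tQuad s a b e f = s c d a + s c d b + s c d e + s c d f) :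
    tQuad s a b c d + tQuad s c d e f + tQuad s e f a b =
      RR s a b c d e f + RR s e f c d a b := by
  have rot := s_rotate hsymm1 hsymm2
  rw [tQuad_add_tQuad_add_tQuad_eq_RR_add_RR hsymm1 hsymm2]
  simp only [RR, tQuad] at h ⊢
  linarith [rot e c d, rot f c d]

end Symmetric

theorem tQuad_two_three_six_one_eq (s : ℕ → ℕ → ℕ → ℝ)
    (hsymm1 : ∀ a b c, s a b c = s b a c) (hsymm2 : ∀ a b c, s a b c = s a c b)
    (hmom : ∀ a ∈ Finset.Icc 1 6,
      ∑ b ∈ Finset.Icc 1 6, ∑ c ∈ Finset.Icc 1 6,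
        (if b < c ∧ a ≠ b ∧ a ≠ c then s a b c else 0) = 0) :
    tQuad s 2 3 6 1 = s 4 5 2 + s 4 5 3 + s 4 5 6 + s 4 5 1 := by
  have sort12 : ∀ {a b c}, b < a → s a b c = s b a c := fun _ => hsymm1 _ _ _
  have sort23 : ∀ {a b c}, c < b → s a b c = s a c b := fun _ => hsymm2 _ _ _
  have h1 := hmom 1 (by simp)
  have h2 := hmom 2 (by simp)
  have h3 := hmom 3 (by simp)
  have h4 := hmom 4 (by simp)
  have h5 := hmom 5 (by simp)
  have h6 := hmom 6 (by simp)
  simp only [Finset.sum_Icc_succ_top, Finset.Icc_self, Finset.sum_singleton, Nat.reduceAdd,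
    Nat.reduceLeDiff, Nat.reduceLT, Nat.reduceEqDiff, ne_eq, not_true_eq_false, not_false_eq_true,
    and_false, and_true, ite_true, ite_false, add_zero, zero_add, sort12, sort23] at h1 h2 h3 h4 h5 h6
  simp only [tQuad, sort12, sort23, Nat.reduceLT]
  linarith

theorem bipyramid_identities_general (s : ℕ → ℕ → ℕ → ℝ)
    (hsymm1 : ∀ a b c, s a b c = s b a c)
    (hsymm2 : ∀ a b c, s a b c = s a c b)
    (hmom : ∀ a ∈ Finset.Icc 1 6,
      ∑ b ∈ Finset.Icc 1 6, ∑ c ∈ Finset.Icc 1 6,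
        (if b < c ∧ a ≠ b ∧ a ≠ c then s a b c else 0) = 0) :
    tQuad s 1 2 3 4 + tQuad s 3 4 5 6 + tQuad s 5 6 1 2 =
      RR s 1 2 3 4 5 6 + RR s 1 2 5 6 3 4 ∧
    tQuad s 2 3 4 5 + tQuad s 4 5 6 1 + tQuad s 6 1 2 3 =
      RR s 2 3 4 5 6 1 + RR s 6 1 4 5 2 3 :=
  ⟨tQuad_add_tQuad_add_tQuad_eq_RR_add_RR hsymm1 hsymm2 1 2 3 4 5 6,
    tQuad_add_tQuad_add_tQuad_eq_RR_add_RR_of_tQuad_eq hsymm1 hsymm2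
      (tQuad_two_three_six_one_eq s hsymm1 hsymm2 hmom)⟩

theorem bipyramid_identities (s : ℕ → ℕ → ℕ → ℝ)
    (hsymm1 : ∀ a b c, s a b c = s b a c)
    (hsymm2 : ∀ a b c, s a b c = s a c b)
    (hrep : ∀ a c, s a a c = 0)
    (hmom : ∀ a ∈ Finset.Icc 1 6,
      ∑ b ∈ Finset.Icc 1 6, ∑ c ∈ Finset.Icc 1 6,
        (if b < c ∧ a ≠ b ∧ a ≠ c then s a b c else 0) = 0) :
    tQuad s 1 2 3 4 + tQuad s 3 4 5 6 + tQuad s 5 6 1 2 =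
      RR s 1 2 3 4 5 6 + RR s 1 2 5 6 3 4 ∧
    tQuad s 2 3 4 5 + tQuad s 4 5 6 1 + tQuad s 6 1 2 3 =
      RR s 2 3 4 5 6 1 + RR s 6 1 4 5 2 3 :=
  bipyramid_identities_general s hsymm1 hsymm2 hmom
end

section
/- Let $X$ be a $p \times q$ real (or complex) matrix of rank exactly 2, with $p, q \geq 2$. Let $P$ be the $p \times p$ skew-symmetric matrix of $2\times 2$ minors coming from a rank-2 factorization adapted to the column space of $X$, and $Q$ similarly for the row space. Then for each $t \neq 0$, the $(p+q)\times(p+q)$ block matrix $V = \begin{pmatrix} tP & X \\ -X^T & t^{-1}Q \end{pmatrix}$ is skew-symmetric of rank 2. -/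
/-!
Since `J² = -1`, the block matrix factors through a space of dimension two:
`V = [A; t⁻¹ Bᵀ J] * [t J Aᵀ, B]`, so its rank is at most two, while it contains `X`,
of rank two, as a block. Skew-symmetry is inherited from that of `J`.
-/

open Matrix

namespace Matrix

variable {R l m n o k : Type*}

theorem skew_two_transpose [Ring R] :
    (!![0, 1; -1, 0] : Matrix (Fin 2) (Fin 2) R)ᵀ = -!![0, 1; -1, 0] := by
  ext i j
  fin_cases i <;> fin_cases j <;> simp

theorem skew_two_mul_self [Ring R] :
    (!![0, 1; -1, 0] : Matrix (Fin 2) (Fin 2) R) * !![0, 1; -1, 0] = -1 := by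
  ext i j
  fin_cases i <;> fin_cases j <;> simp [Matrix.mul_apply, Fin.sum_univ_two]

theorem transpose_mul_mul_transpose_eq_neg [CommRing R] [Fintype k] [Fintype n]
    {J : Matrix k k R} (hJ : Jᵀ = -J) (M : Matrix n k R) :
    (M * J * Mᵀ)ᵀ = -(M * J * Mᵀ) := by
  rw [transpose_mul, transpose_mul, transpose_transpose, hJ, Matrix.neg_mul, Matrix.mul_neg,
    Matrix.mul_assoc]

theorem fromBlocks_transpose_eq_neg [InvolutiveNeg R] {A : Matrix m m R} {D : Matrix n n R}
    (hA : Aᵀ = -A) (hD : Dᵀ = -D) (B : Matrix m n R) :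
    (fromBlocks A B (-Bᵀ) D)ᵀ = -fromBlocks A B (-Bᵀ) D := by
  rw [fromBlocks_transpose, fromBlocks_neg, hA, hD, transpose_neg, transpose_transpose, neg_neg]

theorem rank_le_rank_fromBlocks₁₂ [CommSemiring R] [StrongRankCondition R] [Fintype n]
    [Fintype o] (A : Matrix l n R) (B : Matrix l o R) (C : Matrix m n R) (D : Matrix m o R) :
    B.rank ≤ (fromBlocks A B C D).rank :=
  rank_submatrix_le (fromBlocks A B C D) Sum.inl Sum.inr

theorem fromBlocks_eq_fromRows_mul_fromCols [Field R] [Fintype k] [DecidableEq k]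
    {J : Matrix k k R} (hJ : J * J = -1) {t : R} (ht : t ≠ 0) (A : Matrix m k R)
    (B : Matrix k n R) :
    fromBlocks (t • (A * J * Aᵀ)) (A * B) (-(A * B)ᵀ) (t⁻¹ • (Bᵀ * J * B)) =
      fromRows A (t⁻¹ • (Bᵀ * J)) * fromCols (t • (J * Aᵀ)) B := by
  have hlower : t⁻¹ • (Bᵀ * J) * t • (J * Aᵀ) = -(A * B)ᵀ := by
    rw [Matrix.smul_mul, Matrix.mul_smul, smul_smul, inv_mul_cancel₀ ht, one_smul,
      Matrix.mul_assoc, ← Matrix.mul_assoc J, hJ, transpose_mul,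
      Matrix.neg_mul, Matrix.one_mul, Matrix.mul_neg]
  rw [fromRows_mul_fromCols, hlower, Matrix.mul_smul, Matrix.smul_mul, Matrix.mul_assoc A]

theorem rank_mul_le_card_width [CommSemiring R] [StrongRankCondition R] [Fintype k] [Fintype n]
    (C : Matrix m k R) (D : Matrix k n R) : (C * D).rank ≤ Fintype.card k :=
  (rank_mul_le_left C D).trans C.rank_le_card_width

end Matrix

theorem fiber_skew_rank_two_general (p q : ℕ)
    (X : Matrix (Fin p) (Fin q) ℝ) (hX : X.rank = 2)
    (A : Matrix (Fin p) (Fin 2) ℝ) (B : Matrix (Fin 2) (Fin q) ℝ)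
    (hAB : X = A * B) (t : ℝ) (ht : t ≠ 0) :
    letI J : Matrix (Fin 2) (Fin 2) ℝ := !![0, 1; -1, 0]
    letI P : Matrix (Fin p) (Fin p) ℝ := A * J * Aᵀ
    letI Q : Matrix (Fin q) (Fin q) ℝ := Bᵀ * J * B
    letI V : Matrix (Fin p ⊕ Fin q) (Fin p ⊕ Fin q) ℝ :=
      Matrix.fromBlocks (t • P) X (-Xᵀ) (t⁻¹ • Q)
    Vᵀ = -V ∧ V.rank = 2 := by
  subst hAB
  have hP := transpose_mul_mul_transpose_eq_neg skew_two_transpose A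
  have hQ := transpose_mul_mul_transpose_eq_neg skew_two_transpose Bᵀ
  rw [transpose_transpose] at hQ
  refine ⟨fromBlocks_transpose_eq_neg ?_ ?_ _, le_antisymm ?_ ?_⟩
  · rw [transpose_smul, hP, smul_neg]
  · rw [transpose_smul, hQ, smul_neg]
  · rw [fromBlocks_eq_fromRows_mul_fromCols skew_two_mul_self ht]
    exact (rank_mul_le_card_width _ _).trans_eq (Fintype.card_fin 2)
  · exact hX.ge.trans (rank_le_rank_fromBlocks₁₂ _ _ _ _)

theorem fiber_skew_rank_two (p q : ℕ) (hp : 2 ≤ p) (hq : 2 ≤ q)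
    (X : Matrix (Fin p) (Fin q) ℝ) (hX : X.rank = 2)
    (A : Matrix (Fin p) (Fin 2) ℝ) (B : Matrix (Fin 2) (Fin q) ℝ)
    (hAB : X = A * B) (t : ℝ) (ht : t ≠ 0) :
    letI J : Matrix (Fin 2) (Fin 2) ℝ := !![0, 1; -1, 0]
    letI P : Matrix (Fin p) (Fin p) ℝ := A * J * Aᵀ
    letI Q : Matrix (Fin q) (Fin q) ℝ := Bᵀ * J * B
    letI V : Matrix (Fin p ⊕ Fin q) (Fin p ⊕ Fin q) ℝ :=
      Matrix.fromBlocks (t • P) X (-Xᵀ) (t⁻¹ • Q)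
    Vᵀ = -V ∧ V.rank = 2 :=
  fiber_skew_rank_two_general p q X hX A B hAB t ht
end
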